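/- Typing is closed under fixpoints: if λx.M is a closed abstraction with λx.M ∈ ⟦A→A⟧, then fix x.M ∈ T̄⟦A⟧. -/

import Mathlib

namespace PCF

/-- Terms of the simple CBV, PCF-like language.  Variables are natural numbers. -/
inductive Tm : Type
  | var : ℕ → Tm
  | zero : Tm
  | succ : Tm → Tm
  | pred : Tm → Tm
  | ifz : Tm → Tm → Tm → Tm
  | abs : ℕ → Tm → Tm
  | app : Tm → Tm → Tm
  | fix : ℕ → Tm → Tm
  | pair : Tm → Tm → Tm
  | lett : ℕ → ℕ → Tm → Tm → Tm
  deriving DecidableEq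

/-- The numeral `succ^n(zero)`. -/
def numeral : ℕ → Tm
  | 0 => .zero
  | n + 1 => .succ (numeral n)

/-- Values. -/
inductive IsValue : Tm → Prop
  | var (x : ℕ) : IsValue (.var x)
  | num (n : ℕ) : IsValue (numeral n)
  | pair {V W : Tm} : IsValue V → IsValue W → IsValue (.pair V W)
  | abs (x : ℕ) (M : Tm) : IsValue (.abs x M)

/-- Capture-permitting substitution `M[N/x]` (adequate since we only ever
substitute closed terms). -/
def subst (x : ℕ) (N : Tm) : Tm → Tm
  | .var y => if y = x then N else .var y
  | .zero => .zero
  | .succ M => .succ (subst x N M)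
  | .pred M => .pred (subst x N M)
  | .ifz M P Q => .ifz (subst x N M) (subst x N P) (subst x N Q)
  | .abs y M => if y = x then .abs y M else .abs y (subst x N M)
  | .app M P => .app (subst x N M) (subst x N P)
  | .fix y M => if y = x then .fix y M else .fix y (subst x N M)
  | .pair M P => .pair (subst x N M) (subst x N P)
  | .lett y z M P =>
      .lett y z (subst x N M) (if y = x ∨ z = x then P else subst x N P)

/-- Free variables. -/
def fv : Tm → Finset ℕ
  | .var y => {y}
  | .zero => ∅
  | .succ M => fv M
  | .pred M => fv M
  | .ifz M P Q => fv M ∪ fv P ∪ fv Q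
  | .abs y M => fv M \ {y}
  | .app M P => fv M ∪ fv P
  | .fix y M => fv M \ {y}
  | .pair M P => fv M ∪ fv P
  | .lett y z M P => fv M ∪ (fv P \ {y, z})

def ClosedTm (M : Tm) : Prop := fv M = ∅

/-- One-step call-by-value reduction (closure of the redex rules under
evaluation contexts). -/
inductive Step : Tm → Tm → Prop
  | ifz_zero {N P : Tm} : Step (.ifz (numeral 0) N P) N
  | ifz_succ {n : ℕ} {N P : Tm} : Step (.ifz (numeral (n + 1)) N P) P
  | lett_beta {x y : ℕ} {V W M : Tm} : IsValue V → IsValue W →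
      Step (.lett x y (.pair V W) M) (subst y W (subst x V M))
  | fix_step {x : ℕ} {M : Tm} : Step (.fix x M) (subst x (.fix x M) M)
  | pred_zero : Step (.pred (numeral 0)) (numeral 0)
  | pred_succ {n : ℕ} : Step (.pred (numeral (n + 1))) (numeral n)
  | beta {x : ℕ} {M V : Tm} : IsValue V → Step (.app (.abs x M) V) (subst x V M)
  | succ_ctx {M M' : Tm} : Step M M' → Step (.succ M) (.succ M')
  | pred_ctx {M M' : Tm} : Step M M' → Step (.pred M) (.pred M')
  | pair_left {M M' N : Tm} : Step M M' → Step (.pair M N) (.pair M' N)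
  | pair_right {V N N' : Tm} : IsValue V → Step N N' → Step (.pair V N) (.pair V N')
  | lett_ctx {x y : ℕ} {M M' N : Tm} : Step M M' → Step (.lett x y M N) (.lett x y M' N)
  | ifz_ctx {M M' N P : Tm} : Step M M' → Step (.ifz M N P) (.ifz M' N P)
  | app_right {x : ℕ} {M N N' : Tm} : Step N N' →
      Step (.app (.abs x M) N) (.app (.abs x M) N')
  | app_left {M M' N : Tm} : Step M M' → Step (.app M N) (.app M' N)

/-- Many-step reduction. -/
def Steps : Tm → Tm → Prop := Relation.ReflTransGen Step

def NormalForm (M : Tm) : Prop := ¬ ∃ N, Step M N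

def Evaluates (M : Tm) : Prop := ∃ V, Steps M V ∧ IsValue V

/-- `M` diverges: it has no normal form. -/
def Diverges (M : Tm) : Prop := ¬ ∃ N, Steps M N ∧ NormalForm N

def Stuck (M : Tm) : Prop := NormalForm M ∧ ¬ IsValue M

def GoesWrong (M : Tm) : Prop := ∃ P, Steps M P ∧ Stuck P

/-- `div` = `fix x. x`. -/
def divTm : Tm := .fix 0 (.var 0)

/-- `P ≲ N`: if `P` reduces to a normal form then `N` reduces to the same
normal form. -/
def RefBelow (P N : Tm) : Prop := ∀ R, Steps P R → NormalForm R → Steps N R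

/-- Fixpoint approximants. -/
def fixApprox (x : ℕ) (M : Tm) : ℕ → Tm
  | 0 => divTm
  | n + 1 => subst x (fixApprox x M n) M

/-- Finitely verifiable types. -/
inductive FTy : Type
  | nat : FTy
  | prod : FTy → FTy → FTy
  deriving DecidableEq

/-- Types: `Nat | A×B | A→B | A⇝F | Ok` (necessity arrows only to finitely
verifiable types). -/
inductive Ty : Type
  | nat : Ty
  | prod : Ty → Ty → Ty
  | arrow : Ty → Ty → Ty
  | narrow : Ty → FTy → Ty
  | ok : Ty
  deriving DecidableEq

/-- Inclusion of finitely verifiable types into types. -/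
def FTy.toTy : FTy → Ty
  | .nat => .nat
  | .prod A B => .prod A.toTy B.toTy

/-- `T⟦·⟧` applied to a set of values: the terms that evaluate into it. -/
def TSem (Sv : Tm → Prop) (M : Tm) : Prop :=
  ClosedTm M ∧ ∃ V, Steps M V ∧ IsValue V ∧ Sv V

/-- `T̄⟦·⟧`: evaluate into the set, or diverge. -/
def TBarSem (Sv : Tm → Prop) (M : Tm) : Prop :=
  TSem Sv M ∨ (ClosedTm M ∧ Diverges M)

/-- Semantics of finitely verifiable types. -/
def FSem : FTy → Tm → Prop
  | .nat => fun M => ∃ n, M = numeral n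
  | .prod A B => fun M => ∃ V W, M = .pair V W ∧ FSem A V ∧ FSem B W

/-- Semantics of types, as sets of closed values. -/
def Sem : Ty → Tm → Prop
  | .nat => fun M => ∃ n, M = numeral n
  | .prod A B => fun M => ∃ V W, M = .pair V W ∧ Sem A V ∧ Sem B W
  | .arrow A B => fun M => ∃ x P, M = .abs x P ∧ ClosedTm M ∧
      ∀ V, ClosedTm V → IsValue V → Sem A V → TBarSem (Sem B) (subst x V P)
  | .narrow A F => fun M => ∃ x P, M = .abs x P ∧ ClosedTm M ∧
      ∀ V, ClosedTm V → IsValue V → TSem (FSem F) (subst x V P) → Sem A V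
  | .ok => fun M => ClosedTm M ∧ IsValue M

/-- Typing formulas `M : A`. -/
structure Formula where
  tm : Tm
  ty : Ty
  deriving DecidableEq

/-- Make a formula. -/
def fm (M : Tm) (A : Ty) : Formula := ⟨M, A⟩

/-- `x` does not occur free in any formula of `Γ`. -/
def FreshFor (x : ℕ) (Γ : Finset Formula) : Prop := ∀ φ ∈ Γ, x ∉ fv φ.tm

def IsArrowTy (A : Ty) : Prop :=
  (∃ B C, A = .arrow B C) ∨ (∃ B F, A = .narrow B F)

def IsProdTy (A : Ty) : Prop := ∃ B C, A = .prod B C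

/-- Disjointness of types: one is `Nat` and the other is not, or one is an
arrow and the other is not, or one is a product and the other is not. -/
def Disj (A B : Ty) : Prop :=
  (A = .nat ∧ B ≠ .nat) ∨ (B = .nat ∧ A ≠ .nat) ∨
  (IsArrowTy A ∧ ¬ IsArrowTy B) ∨ (IsArrowTy B ∧ ¬ IsArrowTy A) ∨
  (IsProdTy A ∧ ¬ IsProdTy B) ∨ (IsProdTy B ∧ ¬ IsProdTy A)

/-- The two-sided type system (including the `Ok` rules). -/
inductive Der : Finset Formula → Finset Formula → Prop
  | id (Γ Δ : Finset Formula) (x : ℕ) (A : Ty) :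
      Der (insert (fm (.var x) A) Γ) (insert (fm (.var x) A) Δ)
  | dis {Γ Δ : Finset Formula} {M : Tm} {A B : Ty} :
      Disj A B → Der Γ (insert (fm M B) Δ) → Der (insert (fm M A) Γ) Δ
  | zeroR (Γ Δ : Finset Formula) : Der Γ (insert (fm .zero .nat) Δ)
  | succR {Γ Δ M} : Der Γ (insert (fm M .nat) Δ) → Der Γ (insert (fm (.succ M) .nat) Δ)
  | predR {Γ Δ M} : Der Γ (insert (fm M .nat) Δ) → Der Γ (insert (fm (.pred M) .nat) Δ)
  | letR {Γ Δ : Finset Formula} {x y : ℕ} {M N : Tm} {A B C : Ty} :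
      Der Γ (insert (fm M (.prod B C)) Δ) →
      Der (insert (fm (.var x) B) (insert (fm (.var y) C) Γ)) (insert (fm N A) Δ) →
      FreshFor x Γ → FreshFor x Δ → FreshFor y Γ → FreshFor y Δ →
      Der Γ (insert (fm (.lett x y M N) A) Δ)
  | appR {Γ Δ M N A B} :
      Der Γ (insert (fm M (.arrow B A)) Δ) → Der Γ (insert (fm N B) Δ) →
      Der Γ (insert (fm (.app M N) A) Δ)
  | pairR {Γ Δ M N A B} :
      Der Γ (insert (fm M A) Δ) → Der Γ (insert (fm N B) Δ) →
      Der Γ (insert (fm (.pair M N) (.prod A B)) Δ)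
  | absR {Γ Δ : Finset Formula} {x : ℕ} {M : Tm} {A B : Ty} :
      Der (insert (fm (.var x) B) Γ) (insert (fm M A) Δ) →
      FreshFor x Γ → FreshFor x Δ →
      Der Γ (insert (fm (.abs x M) (.arrow B A)) Δ)
  | abnR {Γ Δ : Finset Formula} {x : ℕ} {M : Tm} {B : Ty} {F : FTy} :
      Der (insert (fm M F.toTy) Γ) (insert (fm (.var x) B) Δ) →
      FreshFor x Γ → FreshFor x Δ →
      Der Γ (insert (fm (.abs x M) (.narrow B F)) Δ)
  | fixR {Γ Δ : Finset Formula} {x : ℕ} {M : Tm} {A : Ty} :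
      Der (insert (fm (.var x) A) Γ) (insert (fm M A) Δ) →
      FreshFor x Γ → FreshFor x Δ →
      Der Γ (insert (fm (.fix x M) A) Δ)
  | ifzR {Γ Δ M N P A} :
      Der Γ (insert (fm M .nat) Δ) → Der Γ (insert (fm N A) Δ) →
      Der Γ (insert (fm P A) Δ) →
      Der Γ (insert (fm (.ifz M N P) A) Δ)
  | succL {Γ Δ M} : Der (insert (fm M .nat) Γ) Δ → Der (insert (fm (.succ M) .nat) Γ) Δ
  | predL {Γ Δ M} : Der (insert (fm M .nat) Γ) Δ → Der (insert (fm (.pred M) .nat) Γ) Δ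
  | appL {Γ Δ : Finset Formula} {M N : Tm} {B : Ty} {A : FTy} :
      Der Γ (insert (fm M (.narrow B A)) Δ) → Der (insert (fm N B) Γ) Δ →
      Der (insert (fm (.app M N) A.toTy) Γ) Δ
  | pairL1 {Γ Δ M1 M2 A1 A2} : Der (insert (fm M1 A1) Γ) Δ →
      Der (insert (fm (.pair M1 M2) (.prod A1 A2)) Γ) Δ
  | pairL2 {Γ Δ M1 M2 A1 A2} : Der (insert (fm M2 A2) Γ) Δ →
      Der (insert (fm (.pair M1 M2) (.prod A1 A2)) Γ) Δ
  | letL1 {Γ Δ : Finset Formula} {x y : ℕ} {M N : Tm} {A : Ty} :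
      Der (insert (fm N A) Γ) Δ →
      FreshFor x Γ → FreshFor x Δ → FreshFor y Γ → FreshFor y Δ →
      Der (insert (fm (.lett x y M N) A) Γ) Δ
  | letL2 {Γ Δ : Finset Formula} {x y : ℕ} {M N : Tm} {A B1 B2 : Ty} :
      Der (insert (fm M (.prod B1 B2)) Γ) Δ →
      Der (insert (fm N A) Γ) (insert (fm (.var x) B1) Δ) →
      Der (insert (fm N A) Γ) (insert (fm (.var y) B2) Δ) →
      FreshFor x Γ → FreshFor x Δ → FreshFor y Γ → FreshFor y Δ →
      Der (insert (fm (.lett x y M N) A) Γ) Δ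
  | ifzL1 {Γ Δ M N P A} : Der (insert (fm M .nat) Γ) Δ →
      Der (insert (fm (.ifz M N P) A) Γ) Δ
  | ifzL2 {Γ Δ M N P A} : Der (insert (fm N A) Γ) Δ → Der (insert (fm P A) Γ) Δ →
      Der (insert (fm (.ifz M N P) A) Γ) Δ
  | okVarR (Γ Δ : Finset Formula) (x : ℕ) : Der Γ (insert (fm (.var x) .ok) Δ)
  | okL {Γ Δ M A} : Der (insert (fm M .ok) Γ) Δ → Der (insert (fm M A) Γ) Δ
  | okR {Γ Δ M A} : Der Γ (insert (fm M A) Δ) → Der Γ (insert (fm M .ok) Δ)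
  | okApL1 {Γ Δ M N A} : Der (insert (fm M (.narrow .ok A)) Γ) Δ →
      Der (insert (fm (.app M N) .ok) Γ) Δ
  | okApL2 {Γ Δ M N} : Der (insert (fm N .ok) Γ) Δ → Der (insert (fm (.app M N) .ok) Γ) Δ
  | okSL {Γ Δ M} : Der (insert (fm M .nat) Γ) Δ → Der (insert (fm (.succ M) .ok) Γ) Δ
  | okPL {Γ Δ M} : Der (insert (fm M .nat) Γ) Δ → Der (insert (fm (.pred M) .ok) Γ) Δ
  | okPrL1 {Γ Δ M1 M2} : Der (insert (fm M1 .ok) Γ) Δ →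
      Der (insert (fm (.pair M1 M2) .ok) Γ) Δ
  | okPrL2 {Γ Δ M1 M2} : Der (insert (fm M2 .ok) Γ) Δ →
      Der (insert (fm (.pair M1 M2) .ok) Γ) Δ

/-- Simultaneous substitution by a valuation (total substitution); suitable
since valuations map variables to closed terms. -/
def msubst (θ : ℕ → Tm) : Tm → Tm
  | .var y => θ y
  | .zero => .zero
  | .succ M => .succ (msubst θ M)
  | .pred M => .pred (msubst θ M)
  | .ifz M P Q => .ifz (msubst θ M) (msubst θ P) (msubst θ Q)
  | .abs y M => .abs y (msubst (Function.update θ y (.var y)) M)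
  | .app M P => .app (msubst θ M) (msubst θ P)
  | .fix y M => .fix y (msubst (Function.update θ y (.var y)) M)
  | .pair M P => .pair (msubst θ M) (msubst θ P)
  | .lett y z M P =>
      .lett y z (msubst θ M)
        (msubst (Function.update (Function.update θ y (.var y)) z (.var z)) P)

/-- A valuation: a substitution by closed terms. -/
def ClosedVal (θ : ℕ → Tm) : Prop := ∀ x, ClosedTm (θ x)

/-- `θ` satisfies `M : A` on the left: `Mθ ∈ T⟦A⟧`. -/
def SatL (θ : ℕ → Tm) (φ : Formula) : Prop := TSem (Sem φ.ty) (msubst θ φ.tm)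

/-- `θ` satisfies `M : A` on the right: `Mθ ∈ T̄⟦A⟧`. -/
def SatR (θ : ℕ → Tm) (φ : Formula) : Prop := TBarSem (Sem φ.ty) (msubst θ φ.tm)

/-- Truth of a judgement: `Γ ⊨ Δ`. -/
def Models (Γ Δ : Finset Formula) : Prop :=
  ∀ θ : ℕ → Tm, ClosedVal θ → (∀ φ ∈ Γ, SatL θ φ) → ∃ φ ∈ Δ, SatR θ φ

/-!
Compare `fix x.M` with its approximants `fixApprox x M n`. Relate two terms when they are built
alike except that occurrences of `fix x.M` on the left face approximants on the right; if every
approximant faced has index at least `k + n`, then `n` reduction steps on the left are matched by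
reduction on the right, each unfolding of `fix x.M` using up one index. So if `fix x.M` reaches a
normal form `U` in `n` steps, then for every `k` the approximant of index `k + n` reaches a normal
form related to `U`. The approximants lie in `T̄⟦A⟧`, so these normal forms lie in `⟦A⟧`, and by
induction on `A` membership in `⟦A⟧` transfers back to `U`. The same simulation argument shows
that the approximants do lie in `T̄⟦A⟧`: in `M[P/x]` with `P ∈ T̄⟦A⟧`, the copies of `P` may be
replaced by the value of `P`, or by any element of `⟦A⟧` if `P` diverges.
-/

theorem numeral_injective : Function.Injective numeral := by
  intro m n h
  induction m generalizing n with
  | zero => cases n <;> simp_all [numeral]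
  | succ m ih =>
    cases n with
    | zero => simp [numeral] at h
    | succ n => simp only [numeral, Tm.succ.injEq] at h; rw [ih h]

theorem IsValue.normalForm {V : Tm} (hV : IsValue V) : NormalForm V := by
  induction hV with
  | num n =>
    induction n with
    | zero => rintro ⟨_, h⟩; cases h
    | succ n ih => rintro ⟨_, h⟩; cases h with | succ_ctx h => exact ih ⟨_, h⟩
  | pair _ _ ihV ihW =>
    rintro ⟨_, h⟩
    cases h with
    | pair_left h => exact ihV ⟨_, h⟩
    | pair_right _ h => exact ihW ⟨_, h⟩
  | _ => rintro ⟨_, h⟩; cases h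

theorem IsValue.not_step {V V' : Tm} (hV : IsValue V) : ¬ Step V V' :=
  fun h => hV.normalForm ⟨_, h⟩

theorem not_normalForm_fix (y : ℕ) (N : Tm) : ¬ NormalForm (.fix y N) :=
  fun h => h ⟨_, .fix_step⟩

theorem numeral_not_step (n : ℕ) {t : Tm} : ¬ Step (numeral n) t :=
  (IsValue.num n).not_step

theorem step_deterministic : Relator.RightUnique Step := by
  intro a b c h₁ h₂
  induction h₁ generalizing c with
  | ifz_zero | ifz_succ | pred_zero | pred_succ =>
    generalize hn : numeral _ = t at h₂
    cases h₂ <;> first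
      | rfl
      | (cases numeral_injective hn <;> rfl)
      | (subst hn; exact absurd ‹Step _ _› (numeral_not_step _))
  | lett_beta hV hW =>
    cases h₂ with
    | lett_beta => rfl
    | lett_ctx h => exact absurd h (hV.pair hW).not_step
  | fix_step => cases h₂; rfl
  | beta hV =>
    cases h₂ with
    | beta => rfl
    | app_right h => exact absurd h hV.not_step
    | app_left h => cases h
  | succ_ctx _ ih => cases h₂ with | succ_ctx h' => rw [ih h']
  | pred_ctx h ih =>
    cases h₂ with
    | pred_ctx h' => rw [ih h']
    | _ => exact absurd h (numeral_not_step _)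
  | ifz_ctx h ih =>
    cases h₂ with
    | ifz_ctx h' => rw [ih h']
    | _ => exact absurd h (numeral_not_step _)
  | lett_ctx h ih =>
    cases h₂ with
    | lett_ctx h' => rw [ih h']
    | lett_beta hV hW => exact absurd h (hV.pair hW).not_step
  | pair_left h ih =>
    cases h₂ with
    | pair_left h' => rw [ih h']
    | pair_right hV _ => exact absurd h hV.not_step
  | pair_right hV _ ih =>
    cases h₂ with
    | pair_left h' => exact absurd h' hV.not_step
    | pair_right _ h' => rw [ih h']
  | app_right h ih =>
    cases h₂ with
    | beta hV => exact absurd h hV.not_step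
    | app_right h' => rw [ih h']
    | app_left h' => cases h'
  | app_left h ih =>
    cases h₂ with
    | app_left h' => rw [ih h']
    | _ => cases h

theorem eq_of_steps_normalForm {M N N' : Tm} (h : Steps M N) (h' : Steps M N')
    (hN : NormalForm N) (hN' : NormalForm N') : N = N' := by
  rcases Relation.ReflTransGen.total_of_right_unique step_deterministic h h' with h | h <;>
    rcases h.cases_head with rfl | ⟨_, hs, _⟩
  all_goals first | rfl | exact absurd ⟨_, hs⟩ ‹NormalForm _›

theorem Steps.map {f : Tm → Tm} (hf : ∀ {M N}, Step M N → Step (f M) (f N)) {M N : Tm}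
    (h : Steps M N) : Steps (f M) (f N) :=
  Relation.ReflTransGen.lift f (fun _ _ => hf) _ _ h

theorem subst_eq_self {x : ℕ} {V N : Tm} (h : x ∉ fv N) : subst x V N = N := by
  induction N with
  | lett y z M P ihM ihP => simp only [fv, Finset.mem_union, Finset.mem_sdiff] at h; grind [subst]
  | _ => grind [subst, fv]

theorem fv_subst_subset (x : ℕ) (V N : Tm) : fv (subst x V N) ⊆ fv N \ {x} ∪ fv V := by
  induction N <;> simp only [subst] <;> (try split_ifs) <;>
    simp only [fv, Finset.subset_iff, Finset.mem_union, Finset.mem_sdiff, Finset.mem_singleton,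
      Finset.mem_insert] at * <;> grind

theorem fv_subset_of_step {M N : Tm} (h : Step M N) : fv N ⊆ fv M := by
  induction h with
  | beta => exact fv_subst_subset _ _ _
  | fix_step => exact (fv_subst_subset _ _ _).trans (by simp [fv])
  | @lett_beta x y V W M =>
    have := fv_subst_subset x V M
    refine (fv_subst_subset _ _ _).trans fun t ht => ?_
    simp only [fv, Finset.subset_iff, Finset.mem_union, Finset.mem_sdiff,
      Finset.mem_singleton, Finset.mem_insert] at *
    grind
  | _ =>
    intro t ht
    simp only [fv, numeral, Finset.subset_iff, Finset.mem_union] at *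
    grind

theorem closedTm_of_steps {M N : Tm} (h : Steps M N) (hM : ClosedTm M) : ClosedTm N := by
  induction h with
  | refl => exact hM
  | tail _ hs ih => exact Finset.subset_empty.mp (ih ▸ fv_subset_of_step hs)

theorem closedTm_subst {x : ℕ} {V N : Tm} (hN : fv N ⊆ {x}) (hV : ClosedTm V) :
    ClosedTm (subst x V N) := by
  refine Finset.subset_empty.mp ((fv_subst_subset x V N).trans ?_)
  rw [hV, Finset.union_empty, Finset.sdiff_eq_empty_iff_subset.mpr hN]

theorem closedTm_abs_iff {x : ℕ} {M : Tm} : ClosedTm (.abs x M) ↔ fv M ⊆ {x} :=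
  Finset.sdiff_eq_empty_iff_subset

theorem closedTm_fix_iff {x : ℕ} {M : Tm} : ClosedTm (.fix x M) ↔ fv M ⊆ {x} :=
  Finset.sdiff_eq_empty_iff_subset

theorem subst_eq_self_of_closedTm {x : ℕ} {V N : Tm} (h : ClosedTm N) : subst x V N = N :=
  subst_eq_self (by rw [ClosedTm] at h; simp [h])

theorem closedTm_pair_iff {M N : Tm} : ClosedTm (.pair M N) ↔ ClosedTm M ∧ ClosedTm N :=
  Finset.union_eq_empty

theorem steps_divTm {M : Tm} (h : Steps divTm M) : M = divTm := by
  induction h with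
  | refl => rfl
  | tail _ hs ih => subst ih; cases hs; rfl

theorem divTm_diverges : Diverges divTm := by
  rintro ⟨N, h, hN⟩
  exact not_normalForm_fix 0 _ (steps_divTm h ▸ hN)

theorem closedTm_divTm : ClosedTm divTm := rfl

theorem Sem.isValue {A : Ty} {V : Tm} (h : Sem A V) : IsValue V := by
  induction A generalizing V with
  | nat => obtain ⟨n, rfl⟩ := h; exact .num n
  | prod B C ihB ihC => obtain ⟨V, W, rfl, hV, hW⟩ := h; exact (ihB hV).pair (ihC hW)
  | arrow | narrow => obtain ⟨y, P, rfl, -⟩ := h; exact .abs y P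
  | ok => exact h.2

theorem closedTm_numeral (n : ℕ) : ClosedTm (numeral n) := by
  induction n with
  | zero => rfl
  | succ n ih => exact ih

theorem Sem.closedTm {A : Ty} {V : Tm} (h : Sem A V) : ClosedTm V := by
  induction A generalizing V with
  | nat => obtain ⟨n, rfl⟩ := h; exact closedTm_numeral n
  | prod B C ihB ihC =>
    obtain ⟨V, W, rfl, hV, hW⟩ := h; exact closedTm_pair_iff.mpr ⟨ihB hV, ihC hW⟩
  | arrow | narrow => obtain ⟨y, P, rfl, hc, -⟩ := h; exact hc
  | ok => exact h.1

theorem FSem.isValue {F : FTy} {V : Tm} (h : FSem F V) : IsValue V := by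
  induction F generalizing V with
  | nat => obtain ⟨n, rfl⟩ := h; exact .num n
  | prod B C ihB ihC => obtain ⟨V, W, rfl, hV, hW⟩ := h; exact (ihB hV).pair (ihC hW)

theorem Sem.nonempty (A : Ty) : ∃ V, Sem A V := by
  have hdiv : ClosedTm (.abs 0 divTm) := rfl
  induction A with
  | nat => exact ⟨numeral 0, 0, rfl⟩
  | ok => exact ⟨numeral 0, rfl, .num 0⟩
  | prod B C ihB ihC =>
    obtain ⟨⟨V, hV⟩, ⟨W, hW⟩⟩ := And.intro ihB ihC
    exact ⟨_, V, W, rfl, hV, hW⟩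
  | arrow =>
    refine ⟨_, 0, divTm, rfl, hdiv, fun V _ _ _ => .inr ?_⟩
    rw [subst_eq_self_of_closedTm closedTm_divTm]
    exact ⟨closedTm_divTm, divTm_diverges⟩
  | narrow =>
    refine ⟨_, 0, divTm, rfl, hdiv, fun V _ _ ⟨_, W, hW, hWv, _⟩ => ?_⟩
    rw [subst_eq_self_of_closedTm closedTm_divTm] at hW
    exact absurd (steps_divTm hW ▸ hWv).normalForm (not_normalForm_fix _ _)

theorem TBarSem.mem_of_steps {P : Tm → Prop} (hP : ∀ V, P V → IsValue V) {M N : Tm}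
    (h : TBarSem P M) (hMN : Steps M N) (hN : NormalForm N) : P N := by
  rcases h with ⟨-, V, hMV, hV, hPV⟩ | ⟨-, hdiv⟩
  · rwa [eq_of_steps_normalForm hMN hMV hN (hP V hPV |>.normalForm)]
  · exact absurd ⟨N, hMN, hN⟩ hdiv

namespace NormalForm

variable {M N P : Tm}

theorem of_succ (h : NormalForm (.succ M)) : NormalForm M := fun ⟨_, hs⟩ => h ⟨_, .succ_ctx hs⟩

theorem of_pred (h : NormalForm (.pred M)) : NormalForm M := fun ⟨_, hs⟩ => h ⟨_, .pred_ctx hs⟩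

theorem of_ifz (h : NormalForm (.ifz M N P)) : NormalForm M := fun ⟨_, hs⟩ => h ⟨_, .ifz_ctx hs⟩

theorem of_lett {x y : ℕ} (h : NormalForm (.lett x y M N)) : NormalForm M :=
  fun ⟨_, hs⟩ => h ⟨_, .lett_ctx hs⟩

theorem of_app_left (h : NormalForm (.app M N)) : NormalForm M := fun ⟨_, hs⟩ => h ⟨_, .app_left hs⟩

theorem of_app_right {x : ℕ} (h : NormalForm (.app (.abs x M) N)) : NormalForm N :=
  fun ⟨_, hs⟩ => h ⟨_, .app_right hs⟩

theorem of_pair_left (h : NormalForm (.pair M N)) : NormalForm M :=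
  fun ⟨_, hs⟩ => h ⟨_, .pair_left hs⟩

theorem of_pair_right (h : NormalForm (.pair M N)) (hM : IsValue M) : NormalForm N :=
  fun ⟨_, hs⟩ => h ⟨_, .pair_right hM hs⟩

end NormalForm

inductive Compat (S : Tm → Tm → Prop) : Tm → Tm → Prop
  | slot {a b : Tm} : S a b → Compat S a b
  | var (y : ℕ) : Compat S (.var y) (.var y)
  | zero : Compat S .zero .zero
  | succ {a b : Tm} : Compat S a b → Compat S (.succ a) (.succ b)
  | pred {a b : Tm} : Compat S a b → Compat S (.pred a) (.pred b)
  | ifz {a b a₁ b₁ a₂ b₂ : Tm} : Compat S a b → Compat S a₁ b₁ → Compat S a₂ b₂ →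
      Compat S (.ifz a a₁ a₂) (.ifz b b₁ b₂)
  | abs (y : ℕ) {a b : Tm} : Compat S a b → Compat S (.abs y a) (.abs y b)
  | app {a b a₁ b₁ : Tm} : Compat S a b → Compat S a₁ b₁ → Compat S (.app a a₁) (.app b b₁)
  | fix (y : ℕ) {a b : Tm} : Compat S a b → Compat S (.fix y a) (.fix y b)
  | pair {a b a₁ b₁ : Tm} : Compat S a b → Compat S a₁ b₁ →
      Compat S (.pair a a₁) (.pair b b₁)
  | lett (y z : ℕ) {a b a₁ b₁ : Tm} : Compat S a b → Compat S a₁ b₁ →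
      Compat S (.lett y z a a₁) (.lett y z b b₁)

def NormalSlots (S : Tm → Tm → Prop) : Prop := ∀ ⦃a b : Tm⦄, S a b → NormalForm a → a = b

namespace Compat

variable {S : Tm → Tm → Prop}

theorem refl (M : Tm) : Compat S M M := by
  induction M with
  | var y => exact .var y
  | zero => exact .zero
  | succ _ ih => exact ih.succ
  | pred _ ih => exact ih.pred
  | ifz _ _ _ ih ih₁ ih₂ => exact ih.ifz ih₁ ih₂
  | abs y _ ih => exact .abs y ih
  | app _ _ ih ih₁ => exact ih.app ih₁
  | fix y _ ih => exact .fix y ih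
  | pair _ _ ih ih₁ => exact ih.pair ih₁
  | lett y z _ _ ih ih₁ => exact .lett y z ih ih₁

theorem mono {S' : Tm → Tm → Prop} (hS : ∀ {a b}, S a b → S' a b) {M N : Tm}
    (h : Compat S M N) : Compat S' M N := by
  induction h with
  | slot h => exact .slot (hS h)
  | var y => exact .var y
  | zero => exact .zero
  | succ _ ih => exact ih.succ
  | pred _ ih => exact ih.pred
  | ifz _ _ _ ih ih₁ ih₂ => exact ih.ifz ih₁ ih₂
  | abs y _ ih => exact .abs y ih
  | app _ _ ih ih₁ => exact ih.app ih₁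
  | fix y _ ih => exact .fix y ih
  | pair _ _ ih ih₁ => exact ih.pair ih₁
  | lett y z _ _ ih ih₁ => exact .lett y z ih ih₁

theorem subst (hS : ∀ {a b}, S a b → ClosedTm a ∧ ClosedTm b) {M M' V V' : Tm}
    (hM : Compat S M M') (hV : Compat S V V') (y : ℕ) :
    Compat S (PCF.subst y V M) (PCF.subst y V' M') := by
  induction hM with
  | slot h =>
    rw [subst_eq_self_of_closedTm (hS h).1, subst_eq_self_of_closedTm (hS h).2]
    exact .slot h
  | var z => by_cases hz : z = y <;> simp [PCF.subst, hz, hV, Compat.var]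
  | zero => exact .zero
  | succ _ ih => exact ih.succ
  | pred _ ih => exact ih.pred
  | ifz _ _ _ ih ih₁ ih₂ => exact ih.ifz ih₁ ih₂
  | abs z h ih => by_cases hz : z = y <;> simp only [PCF.subst, hz, if_true, if_false]
    <;> exact .abs _ ‹_›
  | app _ _ ih ih₁ => exact ih.app ih₁
  | fix z h ih => by_cases hz : z = y <;> simp only [PCF.subst, hz, if_true, if_false]
    <;> exact .fix _ ‹_›
  | pair _ _ ih ih₁ => exact ih.pair ih₁
  | lett z w h h₁ ih ih₁ =>
    by_cases hzw : z = y ∨ w = y <;> simp only [PCF.subst, hzw, if_true, if_false]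
    exacts [.lett z w ih h₁, .lett z w ih ih₁]

theorem eq_numeral_left {n : ℕ} {b : Tm} (hS : NormalSlots S) (h : Compat S (numeral n) b) :
    b = numeral n := by
  induction n generalizing b with
  | zero =>
    cases (h : Compat S .zero b) with
    | slot h => exact (hS h (IsValue.num 0).normalForm).symm
    | zero => rfl
  | succ n ih =>
    cases (h : Compat S (.succ (numeral n)) b) with
    | slot h => exact (hS h (IsValue.num _).normalForm).symm
    | succ h => rw [ih h]; rfl

theorem eq_numeral_right {n : ℕ} {a : Tm} (hS : NormalSlots S) (h : Compat S a (numeral n))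
    (ha : NormalForm a) : a = numeral n := by
  induction n generalizing a with
  | zero =>
    cases (h : Compat S a .zero) with
    | slot h => exact hS h ha
    | zero => rfl
  | succ n ih =>
    cases (h : Compat S a (.succ (numeral n))) with
    | slot h => exact hS h ha
    | succ h => rw [ih h ha.of_succ]; rfl

theorem inv_pair_left {a₁ a₂ b : Tm} (hS : NormalSlots S) (h : Compat S (.pair a₁ a₂) b)
    (ha : NormalForm (.pair a₁ a₂)) :
    ∃ b₁ b₂, b = .pair b₁ b₂ ∧ Compat S a₁ b₁ ∧ Compat S a₂ b₂ := by
  cases h with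
  | slot h => exact ⟨a₁, a₂, (hS h ha).symm, .refl _, .refl _⟩
  | pair h₁ h₂ => exact ⟨_, _, rfl, h₁, h₂⟩

theorem inv_pair_right {a b₁ b₂ : Tm} (hS : NormalSlots S) (h : Compat S a (.pair b₁ b₂))
    (ha : NormalForm a) : ∃ a₁ a₂, a = .pair a₁ a₂ ∧ Compat S a₁ b₁ ∧ Compat S a₂ b₂ := by
  cases h with
  | slot h => exact ⟨b₁, b₂, hS h ha, .refl _, .refl _⟩
  | pair h₁ h₂ => exact ⟨_, _, rfl, h₁, h₂⟩

theorem inv_abs_left {y : ℕ} {P b : Tm} (hS : NormalSlots S) (h : Compat S (.abs y P) b) :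
    ∃ Q, b = .abs y Q ∧ Compat S P Q := by
  cases h with
  | slot h => exact ⟨P, (hS h (IsValue.abs y P).normalForm).symm, .refl _⟩
  | abs _ h => exact ⟨_, rfl, h⟩

theorem inv_abs_right {y : ℕ} {a Q : Tm} (hS : NormalSlots S) (h : Compat S a (.abs y Q))
    (ha : NormalForm a) : ∃ P, a = .abs y P ∧ Compat S P Q := by
  cases h with
  | slot h => exact ⟨Q, hS h ha, .refl _⟩
  | abs _ h => exact ⟨_, rfl, h⟩

theorem eq_of_fSem_left {F : FTy} {W b : Tm} (hS : NormalSlots S) (hW : FSem F W)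
    (h : Compat S W b) : b = W := by
  induction F generalizing W b with
  | nat => obtain ⟨n, rfl⟩ := hW; exact eq_numeral_left hS h
  | prod F₁ F₂ ih₁ ih₂ =>
    obtain ⟨W₁, W₂, rfl, hW₁, hW₂⟩ := hW
    obtain ⟨b₁, b₂, rfl, h₁, h₂⟩ := inv_pair_left hS h (hW₁.isValue.pair hW₂.isValue).normalForm
    rw [ih₁ hW₁ h₁, ih₂ hW₂ h₂]

theorem isValue_right {V b : Tm} (hS : NormalSlots S) (h : Compat S V b) (hV : IsValue V) :
    IsValue b := by
  induction hV generalizing b with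
  | var y =>
    cases h with
    | slot h => rw [← hS h (IsValue.var y).normalForm]; exact .var y
    | var => exact .var y
  | num n => rw [eq_numeral_left hS h]; exact .num n
  | pair hV hW ihV ihW =>
    obtain ⟨b₁, b₂, rfl, h₁, h₂⟩ := inv_pair_left hS h (hV.pair hW).normalForm
    exact (ihV h₁).pair (ihW h₂)
  | abs y P => obtain ⟨Q, rfl, -⟩ := inv_abs_left hS h; exact .abs y Q

theorem isValue_left {a V : Tm} (hS : NormalSlots S) (h : Compat S a V) (ha : NormalForm a)
    (hV : IsValue V) : IsValue a := by
  induction hV generalizing a with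
  | var y =>
    cases h with
    | slot h => rw [hS h ha]; exact .var y
    | var => exact .var y
  | num n => rw [eq_numeral_right hS h ha]; exact .num n
  | pair _ _ ihV ihW =>
    obtain ⟨a₁, a₂, rfl, h₁, h₂⟩ := inv_pair_right hS h ha
    have ha₁ := ihV h₁ ha.of_pair_left
    exact ha₁.pair (ihW h₂ (ha.of_pair_right ha₁))
  | abs y Q => obtain ⟨P, rfl, -⟩ := inv_abs_right hS h ha; exact .abs y P

theorem normalForm {a b : Tm} (hS : NormalSlots S) (h : Compat S a b) (ha : NormalForm a) :
    NormalForm b := by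
  induction h with
  | slot h => rwa [← hS h ha]
  | var y => exact (IsValue.var y).normalForm
  | zero => exact (IsValue.num 0).normalForm
  | abs y => exact (IsValue.abs y _).normalForm
  | fix => exact absurd ha (not_normalForm_fix _ _)
  | succ _ ih => rintro ⟨_, hs⟩; cases hs with | succ_ctx hs => exact ih ha.of_succ ⟨_, hs⟩
  | pred h ih =>
    rintro ⟨_, hs⟩
    cases hs with
    | pred_ctx hs => exact ih ha.of_pred ⟨_, hs⟩
    | _ => rw [eq_numeral_right hS h ha.of_pred] at ha; exact ha ⟨_, by constructor⟩
  | ifz h _ _ ih =>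
    rintro ⟨_, hs⟩
    cases hs with
    | ifz_ctx hs => exact ih ha.of_ifz ⟨_, hs⟩
    | _ => rw [eq_numeral_right hS h ha.of_ifz] at ha; exact ha ⟨_, by constructor⟩
  | app hf hv ihf ihv =>
    rintro ⟨_, hs⟩
    cases hs with
    | app_left hs => exact ihf ha.of_app_left ⟨_, hs⟩
    | beta hV =>
      obtain ⟨P, rfl, -⟩ := inv_abs_right hS hf ha.of_app_left
      exact ha ⟨_, .beta (isValue_left hS hv ha.of_app_right hV)⟩
    | app_right hs =>
      obtain ⟨P, rfl, -⟩ := inv_abs_right hS hf ha.of_app_left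
      exact ihv ha.of_app_right ⟨_, hs⟩
  | pair h₁ _ ih₁ ih₂ =>
    rintro ⟨_, hs⟩
    cases hs with
    | pair_left hs => exact ih₁ ha.of_pair_left ⟨_, hs⟩
    | pair_right hV hs =>
      exact ih₂ (ha.of_pair_right (isValue_left hS h₁ ha.of_pair_left hV)) ⟨_, hs⟩
  | lett _ _ h _ ih =>
    rintro ⟨_, hs⟩
    cases hs with
    | lett_ctx hs => exact ih ha.of_lett ⟨_, hs⟩
    | lett_beta hV hW =>
      obtain ⟨a₁, a₂, rfl, h₁, h₂⟩ := inv_pair_right hS h ha.of_lett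
      have hp := ha.of_lett
      have ha₁ := isValue_left hS h₁ hp.of_pair_left hV
      exact ha ⟨_, .lett_beta ha₁ (isValue_left hS h₂ (hp.of_pair_right ha₁) hW)⟩

end Compat

structure IsSlotSimulation (S : ℕ → Tm → Tm → Prop) : Prop where
  closedTm : ∀ {k a b}, S k a b → ClosedTm a ∧ ClosedTm b
  normalSlots : ∀ k, NormalSlots (S k)
  of_succ : ∀ {k a b}, S (k + 1) a b → S k a b
  step : ∀ {k a a' b}, S (k + 1) a b → Step a a' → ∃ b', Steps b b' ∧ Compat (S k) a' b'

def Reflects (S : ℕ → Tm → Tm → Prop) (P : Tm → Prop) : Prop :=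
  ∀ ⦃U : Tm⦄, NormalForm U → ClosedTm U → (∀ k, ∃ b, Compat (S k) U b ∧ P b) → P U

namespace IsSlotSimulation

variable {S : ℕ → Tm → Tm → Prop}

theorem simulate_step (hS : IsSlotSimulation S) {k : ℕ} {a a' b : Tm}
    (h : Compat (S (k + 1)) a b) (hab : Step a a') : ∃ b', Steps b b' ∧ Compat (S k) a' b' := by
  have mono {M N : Tm} : Compat (S (k + 1)) M N → Compat (S k) M N := Compat.mono hS.of_succ
  have subst {M M' V V' : Tm} (hM : Compat (S (k + 1)) M M') (hV : Compat (S (k + 1)) V V')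
      (y : ℕ) : Compat (S k) (subst y V M) (subst y V' M') :=
    Compat.subst hS.closedTm (mono hM) (mono hV) y
  have hN := hS.normalSlots (k + 1)
  induction h generalizing a' with
  | slot h => exact hS.step h hab
  | var | zero | abs => cases hab
  | succ _ ih =>
    cases hab with
    | succ_ctx hs => obtain ⟨b', hb, h'⟩ := ih hs; exact ⟨_, Steps.map .succ_ctx hb, h'.succ⟩
  | pred h ih =>
    cases hab with
    | pred_ctx hs => obtain ⟨b', hb, h'⟩ := ih hs; exact ⟨_, Steps.map .pred_ctx hb, h'.pred⟩
    | _ => rw [Compat.eq_numeral_left hN h]; exact ⟨_, .single (by constructor), .refl _⟩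
  | ifz h h₁ h₂ ih =>
    cases hab with
    | ifz_ctx hs =>
      obtain ⟨b', hb, h'⟩ := ih hs
      exact ⟨_, Steps.map .ifz_ctx hb, h'.ifz (mono h₁) (mono h₂)⟩
    | ifz_zero => rw [Compat.eq_numeral_left hN h]; exact ⟨_, .single .ifz_zero, mono h₁⟩
    | ifz_succ => rw [Compat.eq_numeral_left hN h]; exact ⟨_, .single .ifz_succ, mono h₂⟩
  | app hf hv ihf ihv =>
    cases hab with
    | app_left hs =>
      obtain ⟨b', hb, h'⟩ := ihf hs
      exact ⟨_, Steps.map .app_left hb, h'.app (mono hv)⟩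
    | app_right hs =>
      obtain ⟨Q, rfl, -⟩ := Compat.inv_abs_left hN hf
      obtain ⟨b', hb, h'⟩ := ihv hs
      exact ⟨_, Steps.map .app_right hb, (mono hf).app h'⟩
    | beta hV =>
      obtain ⟨Q, rfl, hQ⟩ := Compat.inv_abs_left hN hf
      exact ⟨_, .single (.beta (Compat.isValue_right hN hv hV)), subst hQ hv _⟩
  | fix y h => cases hab; exact ⟨_, .single .fix_step, subst h (.fix y h) y⟩
  | pair h₁ h₂ ih₁ ih₂ =>
    cases hab with
    | pair_left hs =>
      obtain ⟨b', hb, h'⟩ := ih₁ hs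
      exact ⟨_, Steps.map .pair_left hb, h'.pair (mono h₂)⟩
    | pair_right hV hs =>
      obtain ⟨b', hb, h'⟩ := ih₂ hs
      exact ⟨_, Steps.map (.pair_right (Compat.isValue_right hN h₁ hV)) hb, (mono h₁).pair h'⟩
  | lett y z h hN' ih =>
    cases hab with
    | lett_ctx hs =>
      obtain ⟨b', hb, h'⟩ := ih hs
      exact ⟨_, Steps.map .lett_ctx hb, h'.lett y z (mono hN')⟩
    | lett_beta hV hW =>
      obtain ⟨b₁, b₂, rfl, h₁, h₂⟩ := Compat.inv_pair_left hN h (hV.pair hW).normalForm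
      exact ⟨_, .single (.lett_beta (Compat.isValue_right hN h₁ hV)
        (Compat.isValue_right hN h₂ hW)), Compat.subst hS.closedTm (subst hN' h₁ y) (mono h₂) z⟩

theorem simulate (hS : IsSlotSimulation S) {a a' : Tm} (h : Steps a a') :
    ∃ n, ∀ j b, Compat (S (j + n)) a b → ∃ b', Steps b b' ∧ Compat (S j) a' b' := by
  induction h with
  | refl => exact ⟨0, fun j b h => ⟨b, .refl, h⟩⟩
  | tail _ hs ih =>
    obtain ⟨n, ih⟩ := ih
    refine ⟨n + 1, fun j b h => ?_⟩
    obtain ⟨b₁, hb₁, h₁⟩ := ih (j + 1) b (by rwa [Nat.add_right_comm])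
    obtain ⟨b', hb', h'⟩ := hS.simulate_step h₁ hs
    exact ⟨b', hb₁.trans hb', h'⟩

theorem tbarSem (hS : IsSlotSimulation S) {P : Tm → Prop} (hP : Reflects S P)
    (hPv : ∀ V, P V → IsValue V) {a : Tm} (ha : ClosedTm a)
    (h : ∀ k, ∃ b, Compat (S k) a b ∧ TBarSem P b) : TBarSem P a := by
  by_cases hdiv : Diverges a
  · exact .inr ⟨ha, hdiv⟩
  obtain ⟨U, haU, hU⟩ := not_not.mp hdiv
  obtain ⟨n, hsim⟩ := hS.simulate haU
  have hPU : P U := hP hU (closedTm_of_steps haU ha) fun j => by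
    obtain ⟨b, hab, hb⟩ := h (j + n)
    obtain ⟨b', hbb', hUb'⟩ := hsim j b hab
    exact ⟨b', hUb', hb.mem_of_steps hPv hbb' (hUb'.normalForm (hS.normalSlots j) hU)⟩
  exact .inl ⟨ha, U, haU, hPv U hPU, hPU⟩

theorem reflects_sem_prod (hS : IsSlotSimulation S) {B C : Ty} (hB : Reflects S (Sem B))
    (hC : Reflects S (Sem C)) : Reflects S (Sem (.prod B C)) := by
  intro U hU hUc h
  obtain ⟨_, hUb, V, W, rfl, -⟩ := h 0
  obtain ⟨U₁, U₂, rfl, -⟩ := Compat.inv_pair_right (hS.normalSlots 0) hUb hU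
  have parts k : (∃ b, Compat (S k) U₁ b ∧ Sem B b) ∧ (∃ b, Compat (S k) U₂ b ∧ Sem C b) := by
    obtain ⟨_, hUb, hb⟩ := h k
    obtain ⟨b₁, b₂, rfl, h₁, h₂⟩ := Compat.inv_pair_left (hS.normalSlots k) hUb hU
    obtain ⟨_, _, ⟨⟩, hb₁, hb₂⟩ := hb
    exact ⟨⟨b₁, h₁, hb₁⟩, ⟨b₂, h₂, hb₂⟩⟩
  rw [closedTm_pair_iff] at hUc
  have hU₁ : Sem B U₁ := hB hU.of_pair_left hUc.1 fun k => (parts k).1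
  exact ⟨U₁, U₂, rfl, hU₁, hC (hU.of_pair_right hU₁.isValue) hUc.2 fun k => (parts k).2⟩

theorem reflects_sem_arrow (hS : IsSlotSimulation S) {B C : Ty} (hC : Reflects S (Sem C)) :
    Reflects S (Sem (.arrow B C)) := by
  intro U hU hUc h
  obtain ⟨_, hUb, y, Q, rfl, -⟩ := h 0
  obtain ⟨P, rfl, -⟩ := Compat.inv_abs_right (hS.normalSlots 0) hUb hU
  refine ⟨y, P, rfl, hUc, fun V hVc hV hVB => ?_⟩
  refine hS.tbarSem hC (fun _ h => h.isValue) (closedTm_subst (closedTm_abs_iff.mp hUc) hVc)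
    fun k => ?_
  obtain ⟨_, hUb, hb⟩ := h k
  obtain ⟨Q, rfl, hPQ⟩ := Compat.inv_abs_left (hS.normalSlots k) hUb
  obtain ⟨_, _, ⟨⟩, -, hQ⟩ := hb
  exact ⟨_, Compat.subst hS.closedTm hPQ (.refl V) y, hQ V hVc hV hVB⟩

theorem reflects_sem_narrow (hS : IsSlotSimulation S) (B : Ty) (F : FTy) :
    Reflects S (Sem (.narrow B F)) := by
  intro U hU hUc h
  obtain ⟨_, hUb, y, Q, rfl, -⟩ := h 0
  obtain ⟨P, rfl, -⟩ := Compat.inv_abs_right (hS.normalSlots 0) hUb hU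
  refine ⟨y, P, rfl, hUc, fun V hVc hV ⟨_, W, hPW, hWv, hW⟩ => ?_⟩
  obtain ⟨n, hsim⟩ := hS.simulate hPW
  obtain ⟨_, hUb, hb⟩ := h n
  obtain ⟨Q, rfl, hPQ⟩ := Compat.inv_abs_left (hS.normalSlots n) hUb
  obtain ⟨_, _, ⟨⟩, hbc, hQ⟩ := hb
  obtain ⟨W', hQW', hWW'⟩ :=
    hsim 0 _ ((Nat.zero_add n).symm ▸ Compat.subst hS.closedTm hPQ (.refl V) y)
  rw [Compat.eq_of_fSem_left (hS.normalSlots 0) hW hWW'] at hQW'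
  exact hQ V hVc hV ⟨closedTm_subst (closedTm_abs_iff.mp hbc) hVc, W, hQW', hWv, hW⟩

theorem reflects_sem (hS : IsSlotSimulation S) (A : Ty) : Reflects S (Sem A) := by
  induction A with
  | nat =>
    intro U hU _ h
    obtain ⟨b, hUb, n, rfl⟩ := h 0
    exact ⟨n, Compat.eq_numeral_right (hS.normalSlots 0) hUb hU⟩
  | prod B C ihB ihC => exact hS.reflects_sem_prod ihB ihC
  | arrow B C _ ihC => exact hS.reflects_sem_arrow ihC
  | narrow B F => exact hS.reflects_sem_narrow B F
  | ok =>
    intro U hU hUc h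
    obtain ⟨b, hUb, -, hb⟩ := h 0
    exact ⟨hUc, Compat.isValue_left (hS.normalSlots 0) hUb hU hb⟩

theorem tbarSem_sem (hS : IsSlotSimulation S) {A : Ty} {a : Tm} (ha : ClosedTm a)
    (h : ∀ k, ∃ b, Compat (S k) a b ∧ TBarSem (Sem A) b) : TBarSem (Sem A) a :=
  hS.tbarSem (hS.reflects_sem A) (fun _ h => h.isValue) ha h

end IsSlotSimulation

def evalSlot (P V : Tm) (_ : ℕ) (a b : Tm) : Prop := Steps P a ∧ b = V

theorem isSlotSimulation_evalSlot {P V : Tm} (hP : ClosedTm P) (hV : ClosedTm V)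
    (huniq : ∀ N, Steps P N → NormalForm N → N = V) : IsSlotSimulation (evalSlot P V) where
  closedTm := fun ⟨h, hb⟩ => ⟨closedTm_of_steps h hP, hb ▸ hV⟩
  normalSlots _ := fun _ _ ⟨h, hb⟩ ha => (huniq _ h ha).trans hb.symm
  of_succ := id
  step := fun ⟨h, hb⟩ hs => ⟨_, .refl, .slot ⟨h.tail hs, hb⟩⟩

theorem tbarSem_subst_of_sem_arrow {x : ℕ} {M P : Tm} {A B : Ty}
    (h : Sem (.arrow A B) (.abs x M)) (hP : TBarSem (Sem A) P) : TBarSem (Sem B) (subst x P M) := by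
  obtain ⟨_, _, ⟨⟩, hc, hM⟩ := h
  have hPc : ClosedTm P := hP.elim And.left And.left
  -- If `P` diverges, no terminating run of `M[P/x]` evaluates a copy of `P`, so any `V` will do.
  obtain ⟨V, hV, huniq⟩ : ∃ V, Sem A V ∧ ∀ N, Steps P N → NormalForm N → N = V := by
    rcases hP with ⟨-, V, hPV, -, hV⟩ | ⟨-, hdiv⟩
    · exact ⟨V, hV, fun N hN hNn => eq_of_steps_normalForm hN hPV hNn hV.isValue.normalForm⟩
    · obtain ⟨V, hV⟩ := Sem.nonempty A
      exact ⟨V, hV, fun N hN hNn => absurd ⟨N, hN, hNn⟩ hdiv⟩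
  have hS := isSlotSimulation_evalSlot hPc hV.closedTm huniq
  refine hS.tbarSem_sem (closedTm_subst (closedTm_abs_iff.mp hc) hPc) fun _ => ⟨subst x V M, ?_, ?_⟩
  exacts [Compat.subst hS.closedTm (.refl M) (.slot ⟨.refl, rfl⟩) x,
    hM V hV.closedTm hV.isValue hV]

theorem tbarSem_fixApprox {x : ℕ} {M : Tm} {A : Ty} (h : Sem (.arrow A A) (.abs x M)) (n : ℕ) :
    TBarSem (Sem A) (fixApprox x M n) := by
  induction n with
  | zero => exact .inr ⟨closedTm_divTm, divTm_diverges⟩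
  | succ n ih => exact tbarSem_subst_of_sem_arrow h ih

theorem closedTm_fixApprox {x : ℕ} {M : Tm} (hM : fv M ⊆ {x}) (n : ℕ) :
    ClosedTm (fixApprox x M n) := by
  induction n with
  | zero => exact closedTm_divTm
  | succ n ih => exact closedTm_subst hM ih

def unfoldSlot (x : ℕ) (M : Tm) (k : ℕ) (a b : Tm) : Prop :=
  a = .fix x M ∧ ∃ m, k ≤ m ∧ b = fixApprox x M m

theorem isSlotSimulation_unfoldSlot {x : ℕ} {M : Tm} (hM : fv M ⊆ {x}) :
    IsSlotSimulation (unfoldSlot x M) := by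
  have closedTm {k a b} : unfoldSlot x M k a b → ClosedTm a ∧ ClosedTm b := by
    rintro ⟨rfl, m, -, rfl⟩; exact ⟨closedTm_fix_iff.mpr hM, closedTm_fixApprox hM m⟩
  refine ⟨closedTm, ?_, ?_, ?_⟩
  · rintro k a b ⟨rfl, -⟩ ha; exact absurd ha (not_normalForm_fix x M)
  · rintro k a b ⟨rfl, m, hm, rfl⟩; exact ⟨rfl, m, by omega, rfl⟩
  · rintro k a a' b ⟨rfl, m, hm, rfl⟩ hs
    cases hs
    obtain ⟨m, rfl⟩ : ∃ m', m = m' + 1 := ⟨m - 1, by omega⟩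
    -- `fixApprox x M (m + 1)` is already `M[fixApprox x M m/x]`: the right side need not move.
    exact ⟨_, .refl, Compat.subst closedTm (.refl M) (.slot ⟨rfl, m, by omega, rfl⟩) x⟩

theorem typing_closed_under_fixpoints_general (x : ℕ) (M : Tm) (A : Ty)
    (h : Sem (.arrow A A) (.abs x M)) :
    TBarSem (Sem A) (.fix x M) := by
  have hM : fv M ⊆ {x} := closedTm_abs_iff.mp h.closedTm
  exact (isSlotSimulation_unfoldSlot hM).tbarSem_sem (closedTm_fix_iff.mpr hM) fun k =>
    ⟨fixApprox x M k, .slot ⟨rfl, k, le_rfl, rfl⟩, tbarSem_fixApprox h k⟩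

/-- Typing is closed under fixpoints: if `λx.M` is a closed
abstraction in `⟦A→A⟧`, then `fix x.M ∈ TBar⟦A⟧`. -/
theorem typing_closed_under_fixpoints (x : ℕ) (M : Tm) (A : Ty)
    (hcl : ClosedTm (.abs x M)) (h : Sem (.arrow A A) (.abs x M)) :
    TBarSem (Sem A) (.fix x M) :=
  typing_closed_under_fixpoints_general x M A h

end PCF
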